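/- Let σ(x) = Σ_{j=1}^{∞} (1/√2)·exp(−(x−j)²/2). Then σ is 1-Lipschitz: |σ(x) − σ(y)| ≤ |x − y| for all x, y ∈ ℝ. -/

import Mathlib

/-!
Write `φ = gaussPhi`. Since `φ' u = -u φ(u)` and `φ` is even, the derivative at `x` of the `N`-th
partial sum of `gaussSigma` is `∑ n ∈ S, (n + a) φ(n + a)` with `a = -x` and `S = {1, …, N}`. So it
suffices to bound every such sum over a finite set `S` of integers by `1` in absolute value, and to
pass to the limit. As `u ↦ u φ(u)` is odd, only the upper bound matters, and only the nonnegative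
arguments `s, s + 1, s + 2, …` contribute. For `b ≥ 3/2` one has `(b + 1) φ(b) ≤ φ(b - 1)`, so the
terms from `s + 2` on telescope to at most `φ(s + 1)`, and `s φ(s) + (s + 2) φ(s + 1) ≤ 1` follows
from `exp v ≥ 1 + v + v² / 2`.
-/

noncomputable def gaussPhi (x : ℝ) : ℝ := (1 / Real.sqrt 2) * Real.exp (-x ^ 2 / 2)

noncomputable def gaussSigma (x : ℝ) : ℝ := ∑' j : ℕ, gaussPhi (x - (j + 1))

open Real Finset Filter Topology

lemma gaussPhi_pos (x : ℝ) : 0 < gaussPhi x := by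
  unfold gaussPhi; positivity

lemma gaussPhi_neg (x : ℝ) : gaussPhi (-x) = gaussPhi x := by
  simp [gaussPhi]

lemma hasDerivAt_gaussPhi (x : ℝ) : HasDerivAt gaussPhi (-x * gaussPhi x) x := by
  have h : HasDerivAt (fun y : ℝ => -y ^ 2 / 2) (-x) x :=
    ((hasDerivAt_pow 2 x).neg.div_const 2).congr_deriv (by ring)
  exact (h.exp.const_mul (1 / √2)).congr_deriv (by unfold gaussPhi; ring)

lemma exp_neg_sq_div_two_le (u : ℝ) : exp (-u ^ 2 / 2) ≤ 8 / (8 + 4 * u ^ 2 + u ^ 4) := by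
  rw [neg_div, exp_neg, le_div_iff₀ (by positivity), inv_mul_eq_div, div_le_iff₀ (exp_pos _)]
  nlinarith [quadratic_le_exp_of_nonneg (x := u ^ 2 / 2) (by positivity)]

lemma mul_gaussPhi_add_le_one {s : ℝ} (hs : 0 ≤ s) :
    s * gaussPhi s + (s + 2) * gaussPhi (s + 1) ≤ 1 := by
  have hrat : s * (8 / (8 + 4 * s ^ 2 + s ^ 4))
      + (s + 2) * (8 / (8 + 4 * (s + 1) ^ 2 + (s + 1) ^ 4)) ≤ √2 := by
    refine le_trans ?_
      ((le_sqrt (by norm_num) (by norm_num)).2 (by norm_num : (141 / 100 : ℝ) ^ 2 ≤ 2))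
    rw [mul_div_assoc', mul_div_assoc', div_add_div _ _ (by positivity) (by positivity),
      div_le_iff₀ (by positivity)]
    nlinarith [sq_nonneg (s - 1), sq_nonneg (s * s - 1), sq_nonneg (s * s - 2 * s),
      sq_nonneg (s * s * s - 1), sq_nonneg (s * s * s * s - 1), mul_nonneg hs hs,
      mul_nonneg (mul_nonneg hs hs) hs]
  have hexp : s * exp (-s ^ 2 / 2) + (s + 2) * exp (-(s + 1) ^ 2 / 2) ≤ √2 :=
    le_trans (add_le_add (mul_le_mul_of_nonneg_left (exp_neg_sq_div_two_le s) hs)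
      (mul_le_mul_of_nonneg_left (exp_neg_sq_div_two_le (s + 1)) (by linarith))) hrat
  unfold gaussPhi
  calc _ = (1 / √2) * (s * exp (-s ^ 2 / 2) + (s + 2) * exp (-(s + 1) ^ 2 / 2)) := by ring
    _ ≤ (1 / √2) * √2 := by gcongr
    _ = 1 := one_div_mul_cancel (by positivity)

lemma add_one_mul_gaussPhi_le {b : ℝ} (hb : 3 / 2 ≤ b) :
    (b + 1) * gaussPhi b ≤ gaussPhi (b - 1) := by
  have hshift : gaussPhi (b - 1) = exp (b - 1 / 2) * gaussPhi b := by
    unfold gaussPhi; rw [mul_left_comm, ← exp_add]; ring_nf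
  have hexp : b + 1 ≤ exp (b - 1 / 2) := by
    nlinarith [quadratic_le_exp_of_nonneg (x := b - 1 / 2) (by linarith)]
  rw [hshift]
  exact mul_le_mul_of_nonneg_right hexp (gaussPhi_pos b).le

lemma sum_range_mul_gaussPhi_le_one {s : ℝ} (hs : 0 ≤ s) (n : ℕ) :
    ∑ k ∈ range n, (s + k) * gaussPhi (s + k) ≤ 1 := by
  have htele : ∀ m : ℕ,
      ∑ k ∈ range (m + 2), (s + k) * gaussPhi (s + k) + gaussPhi (s + m + 1) ≤ 1 := by
    intro m
    induction m with
    | zero =>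
      simp only [sum_range_succ, sum_range_zero, Nat.cast_zero, Nat.cast_one, add_zero, zero_add]
      linarith [mul_gaussPhi_add_le_one hs]
    | succ m ih =>
      have hstep := add_one_mul_gaussPhi_le (b := s + (m + 2))
        (by linarith [(m.cast_nonneg : (0 : ℝ) ≤ m)])
      rw [sum_range_succ]
      push_cast at ih ⊢
      ring_nf at hstep ih ⊢
      linarith
  have hnonneg : ∀ k ∈ range (n + 2), 0 ≤ (s + k) * gaussPhi (s + k) :=
    fun k _ => mul_nonneg (by positivity) (gaussPhi_pos _).le
  calc ∑ k ∈ range n, (s + k) * gaussPhi (s + k)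
      ≤ ∑ k ∈ range (n + 2), (s + k) * gaussPhi (s + k) :=
        sum_le_sum_of_subset_of_nonneg (range_subset_range.2 (by omega)) fun k hk _ => hnonneg k hk
    _ ≤ 1 := by linarith [htele n, gaussPhi_pos (s + n + 1)]

lemma summable_mul_gaussPhi {s : ℝ} (hs : 0 ≤ s) :
    Summable fun k : ℕ => (s + k) * gaussPhi (s + k) :=
  summable_of_sum_range_le (fun k => mul_nonneg (by positivity) (gaussPhi_pos _).le)
    (sum_range_mul_gaussPhi_le_one hs)

lemma tsum_mul_gaussPhi_le_one {s : ℝ} (hs : 0 ≤ s) :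
    ∑' k : ℕ, (s + k) * gaussPhi (s + k) ≤ 1 :=
  Real.tsum_le_of_sum_range_le (fun k => mul_nonneg (by positivity) (gaussPhi_pos _).le)
    (sum_range_mul_gaussPhi_le_one hs)

lemma sum_int_mul_gaussPhi_le_one (a : ℝ) (S : Finset ℤ) :
    ∑ n ∈ S, (n + a) * gaussPhi (n + a) ≤ 1 := by
  set f : ℤ → ℝ := fun n => max ((n + a) * gaussPhi (n + a)) 0
  set m : ℤ := ⌈-a⌉
  set s : ℝ := m + a
  have hs : 0 ≤ s := by linarith [Int.le_ceil (-a)]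
  have hi : Function.Injective fun k : ℕ => (k : ℤ) + m := fun k l h => by simpa using h
  have hsupp : ∀ n ∉ Set.range fun k : ℕ => (k : ℤ) + m, f n = 0 := by
    intro n hn
    have hnm : n < m := by
      by_contra! h
      exact hn ⟨(n - m).toNat, by simp [Int.toNat_of_nonneg (sub_nonneg.2 h)]⟩
    have hneg : (n : ℝ) + a < 0 := by linarith [Int.lt_ceil.1 hnm]
    exact max_eq_right (mul_nonpos_of_nonpos_of_nonneg hneg.le (gaussPhi_pos _).le)
  have hcomp : ∀ k : ℕ, f (k + m) = (s + k) * gaussPhi (s + k) := by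
    intro k
    have harg : ((k + m : ℤ) : ℝ) + a = s + k := by push_cast; ring
    simp only [f, harg]
    exact max_eq_left (mul_nonneg (by positivity) (gaussPhi_pos _).le)
  have hf : Summable f :=
    (hi.summable_iff hsupp).1 <| by
      simpa only [Function.comp_def, hcomp] using summable_mul_gaussPhi hs
  calc ∑ n ∈ S, (n + a) * gaussPhi (n + a)
      ≤ ∑ n ∈ S, f n := sum_le_sum fun _ _ => le_max_left _ _
    _ ≤ ∑' n, f n := hf.sum_le_tsum _ fun _ _ => le_max_right _ _
    _ = ∑' k : ℕ, f (k + m) := (hi.tsum_eq (Function.support_subset_iff'.2 hsupp)).symm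
    _ ≤ 1 := by simpa only [hcomp] using tsum_mul_gaussPhi_le_one hs

lemma abs_sum_int_mul_gaussPhi_le_one (a : ℝ) (S : Finset ℤ) :
    |∑ n ∈ S, (n + a) * gaussPhi (n + a)| ≤ 1 := by
  refine abs_le.2 ⟨?_, sum_int_mul_gaussPhi_le_one a S⟩
  have hodd := sum_int_mul_gaussPhi_le_one (-a) (S.map (Equiv.neg ℤ).toEmbedding)
  simp only [sum_map, Equiv.toEmbedding_apply, Equiv.neg_apply, Int.cast_neg] at hodd
  have : ∀ n : ℤ, (-n + -a : ℝ) * gaussPhi (-n + -a) = -((n + a) * gaussPhi (n + a)) := by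
    intro n; rw [← neg_add, gaussPhi_neg]; ring
  simp only [this, sum_neg_distrib] at hodd
  linarith

lemma summable_gaussPhi_sub (x : ℝ) : Summable fun j : ℕ => gaussPhi (x - (j + 1)) := by
  refine Summable.of_nonneg_of_le (fun j => (gaussPhi_pos _).le) (fun j => ?_)
    (summable_exp_neg_nat.mul_left (1 / √2 * exp (x - 1 / 2)))
  have hexp : exp (-(x - (j + 1)) ^ 2 / 2) ≤ exp (x - 1 / 2) * exp (-j) := by
    rw [← exp_add]
    exact exp_le_exp.2 (by nlinarith [sq_nonneg (x - j)])
  unfold gaussPhi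
  rw [mul_assoc]
  gcongr

lemma lipschitzWith_one_sum_range_gaussPhi (N : ℕ) :
    LipschitzWith 1 fun x => ∑ j ∈ range N, gaussPhi (x - (j + 1)) := by
  have hderiv : ∀ x, HasDerivAt (fun x => ∑ j ∈ range N, gaussPhi (x - (j + 1)))
      (∑ j ∈ range N, -(x - (j + 1)) * gaussPhi (x - (j + 1))) x := fun x =>
    HasDerivAt.fun_sum fun j _ => (hasDerivAt_gaussPhi _).comp_sub_const x _
  refine lipschitzWith_of_nnnorm_deriv_le (fun x => (hderiv x).differentiableAt) fun x => ?_
  rw [(hderiv x).deriv, ← NNReal.coe_le_coe, coe_nnnorm, Real.norm_eq_abs, NNReal.coe_one]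
  have hemb := abs_sum_int_mul_gaussPhi_le_one (-x) ((range N).image fun j : ℕ => (j : ℤ) + 1)
  rw [sum_image fun i _ j _ h => by simpa using h] at hemb
  convert hemb using 3 with j
  rw [← gaussPhi_neg]
  push_cast
  ring_nf

theorem sigma_lipschitz (x y : ℝ) : |gaussSigma x - gaussSigma y| ≤ |x - y| := by
  have hlim : ∀ z, Tendsto (fun N => ∑ j ∈ range N, gaussPhi (z - (j + 1))) atTop
      (𝓝 (gaussSigma z)) := fun z => (summable_gaussPhi_sub z).hasSum.tendsto_sum_nat
  refine le_of_tendsto' ((hlim x).sub (hlim y)).abs fun N => ?_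
  simpa [Real.dist_eq] using (lipschitzWith_one_sum_range_gaussPhi N).dist_le_mul x y
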